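/- For a saturated packing Λ with a negligible fcc-compatible function a, one has √32·|Λ(x,r+1)| ≤ C₁(r+1)² + vol B(x,r+3) for all x ∈ ℝ³ and r ≥ 1, where C₁ is the negligibility constant. -/

import Mathlib

open MeasureTheory Metric Real Filter

noncomputable section

abbrev E3 := EuclideanSpace ℝ (Fin 3)

/-- A packing: centers pairwise at distance at least 2. -/
def IsPacking (Λ : Set E3) : Prop :=
  ∀ u ∈ Λ, ∀ v ∈ Λ, u ≠ v → 2 ≤ dist u v

/-- A saturated packing: a packing such that every point of space is within
distance 2 of some center. -/
def IsSaturated (Λ : Set E3) : Prop :=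
  IsPacking Λ ∧ ∀ x : E3, ∃ v ∈ Λ, dist x v ≤ 2

/-- `A(x,r,Λ)`: volume of the part of `B(x,r)` covered by the unit balls of the packing. -/
def packVol (Λ : Set E3) (x : E3) (r : ℝ) : ℝ :=
  (volume (closedBall x r ∩ ⋃ v ∈ Λ, closedBall v 1)).toReal

/-- `δ(x,r,Λ)`: the finite density. -/
def density (Λ : Set E3) (x : E3) (r : ℝ) : ℝ :=
  packVol Λ x r / (volume (closedBall x r)).toReal

/-- The Voronoi cell of `v` with respect to `Λ`. -/
def Voronoi (Λ : Set E3) (v : E3) : Set E3 :=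
  {x : E3 | ∀ w ∈ Λ, dist x v ≤ dist x w}

/-- `a` is negligible with constant `C₁`. -/
def NegligibleWith (Λ : Set E3) (a : E3 → ℝ) (C₁ : ℝ) : Prop :=
  ∀ (x : E3) (r : ℝ), 1 ≤ r → ∑ᶠ v ∈ Λ ∩ closedBall x r, a v ≤ C₁ * r ^ 2

/-- `a` is fcc-compatible for `Λ`. -/
def FccCompatible (Λ : Set E3) (a : E3 → ℝ) : Prop :=
  ∀ v ∈ Λ, Real.sqrt 32 ≤ (volume (Voronoi Λ v)).toReal + a v

end

/-!
Every center `v ∈ Λ(x, r+1)` satisfies `√32 ≤ vol Ω(v) + a(v)`. Summing over these finitely many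
centers, the Voronoi volumes add up to at most `vol B(x, r+3)`, since the cells lie in that ball
and overlap only in perpendicular bisectors, which are Lebesgue-null; the values of `a` add up to
at most `C₁ (r+1)²` by negligibility.
-/

section Separated

variable {X : Type*} [MetricSpace X] {s : Set X} {ε : ℝ}

theorem isDiscrete_of_pairwise_le_dist (hε : 0 < ε) (hs : s.Pairwise fun u v => ε ≤ dist u v) :
    IsDiscrete s := by
  refine isDiscrete_iff_forall_mem_exists_isOpen.2 fun y hy => ⟨ball y ε, isOpen_ball, ?_⟩
  refine Set.eq_singleton_iff_unique_mem.2 ⟨⟨mem_ball_self hε, hy⟩, fun z ⟨hzy, hz⟩ => ?_⟩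
  by_contra hne
  exact (hs hz hy hne).not_gt (mem_ball.1 hzy)

theorem finite_inter_of_pairwise_le_dist [ProperSpace X] (hε : 0 < ε)
    (hs : s.Pairwise fun u v => ε ≤ dist u v) {K : Set X} (hK : Bornology.IsBounded K) :
    (s ∩ K).Finite :=
  Set.inter_comm K s ▸ finite_isBounded_inter_isClosed (isDiscrete_of_pairwise_le_dist hε hs) hK
    (isClosed_of_pairwise_le_dist hε hs)

end Separated

theorem IsPacking.finite_inter {Λ : Set E3} (hΛ : IsPacking Λ) {K : Set E3}
    (hK : Bornology.IsBounded K) : (Λ ∩ K).Finite :=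
  finite_inter_of_pairwise_le_dist two_pos (fun u hu v hv huv => hΛ u hu v hv huv) hK

theorem isClosed_voronoi (Λ : Set E3) (v : E3) : IsClosed (Voronoi Λ v) := by
  have : Voronoi Λ v = ⋂ w ∈ Λ, {y : E3 | dist y v ≤ dist y w} := by
    ext y
    simp [Voronoi]
  rw [this]
  exact isClosed_biInter fun w _ => isClosed_le (by fun_prop) (by fun_prop)

section Voronoi

variable {Λ : Set E3}

theorem voronoi_subset_closedBall {R : ℝ} (hcov : ∀ y : E3, ∃ w ∈ Λ, dist y w ≤ R) (v : E3) :
    Voronoi Λ v ⊆ closedBall v R := fun y hy => by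
  obtain ⟨w, hw, hyw⟩ := hcov y
  exact mem_closedBall.2 ((hy w hw).trans hyw)

theorem voronoi_inter_voronoi_subset_perpBisector {u v : E3} (hu : u ∈ Λ) (hv : v ∈ Λ) :
    Voronoi Λ u ∩ Voronoi Λ v ⊆ AffineSubspace.perpBisector u v := fun _ ⟨hyu, hyv⟩ =>
  AffineSubspace.mem_perpBisector_iff_dist_eq.2 (le_antisymm (hyu v hv) (hyv u hu))

theorem volume_voronoi_inter_voronoi {u v : E3} (hu : u ∈ Λ) (hv : v ∈ Λ) (huv : u ≠ v) :
    volume (Voronoi Λ u ∩ Voronoi Λ v) = 0 :=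
  measure_mono_null (voronoi_inter_voronoi_subset_perpBisector hu hv) <|
    Measure.addHaar_affineSubspace volume _ (by simpa using huv)

theorem sum_volume_voronoi_le {F : Finset E3} (hF : ↑F ⊆ Λ) {K : Set E3}
    (hK : ∀ v ∈ F, Voronoi Λ v ⊆ K) :
    ∑ v ∈ F, volume (Voronoi Λ v) ≤ volume K :=
  calc ∑ v ∈ F, volume (Voronoi Λ v)
      = volume (⋃ v ∈ F, Voronoi Λ v) := by
        refine (measure_biUnion_finset₀ (fun u hu v hv huv => ?_)
          fun v _ => (isClosed_voronoi Λ v).measurableSet.nullMeasurableSet).symm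
        exact volume_voronoi_inter_voronoi (hF hu) (hF hv) huv
    _ ≤ volume K := measure_mono (Set.iUnion₂_subset hK)

theorem sum_volume_voronoi_toReal_le {F : Finset E3} (hF : ↑F ⊆ Λ) {K : Set E3}
    (hK : ∀ v ∈ F, Voronoi Λ v ⊆ K) (hK_fin : volume K ≠ ⊤) :
    ∑ v ∈ F, (volume (Voronoi Λ v)).toReal ≤ (volume K).toReal := by
  rw [← ENNReal.toReal_sum fun v hv => ne_top_of_le_ne_top hK_fin (measure_mono (hK v hv))]
  exact ENNReal.toReal_mono hK_fin (sum_volume_voronoi_le hF hK)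

end Voronoi

theorem card_bound (Λ : Set E3) (hΛ : IsSaturated Λ)
    (a : E3 → ℝ) (C₁ : ℝ)
    (hneg : NegligibleWith Λ a C₁) (hfcc : FccCompatible Λ a)
    (x : E3) (r : ℝ) (hr : 1 ≤ r) :
    Real.sqrt 32 * ((Λ ∩ closedBall x (r + 1)).ncard : ℝ) ≤
      C₁ * (r + 1) ^ 2 + (volume (closedBall x (r + 3))).toReal := by
  obtain ⟨hpack, hcov⟩ := hΛ
  have hfin := IsPacking.finite_inter hpack (isBounded_closedBall (x := x) (r := r + 1))
  set F := hfin.toFinset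
  have hFΛ : ↑F ⊆ Λ := hfin.coe_toFinset ▸ Set.inter_subset_left
  have hcells : ∀ v ∈ F, Voronoi Λ v ⊆ closedBall x (r + 3) := fun v hv =>
    (voronoi_subset_closedBall hcov v).trans <| closedBall_subset_closedBall' <| by
      linarith [mem_closedBall.1 (hfin.mem_toFinset.1 hv).2]
  rw [Set.ncard_eq_toFinset_card _ hfin]
  calc Real.sqrt 32 * (F.card : ℝ)
      = ∑ _v ∈ F, Real.sqrt 32 := by rw [Finset.sum_const, nsmul_eq_mul, mul_comm]
    _ ≤ ∑ v ∈ F, ((volume (Voronoi Λ v)).toReal + a v) :=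
        Finset.sum_le_sum fun v hv => hfcc v (hFΛ hv)
    _ = ∑ v ∈ F, (volume (Voronoi Λ v)).toReal + ∑ᶠ v ∈ Λ ∩ closedBall x (r + 1), a v := by
        rw [Finset.sum_add_distrib, finsum_mem_eq_finite_toFinset_sum _ hfin]
    _ ≤ (volume (closedBall x (r + 3))).toReal + C₁ * (r + 1) ^ 2 :=
        add_le_add (sum_volume_voronoi_toReal_le hFΛ hcells measure_closedBall_lt_top.ne)
          (hneg x (r + 1) (by linarith))
    _ = _ := add_comm _ _
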